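/- In the extended Kalman filter update P_t = P_{t−1}/τ − k kᵀ z with z = 1 + gᵀP_{t−1}g/τ and k = P_{t−1}g/(zτ), if P_{t−1} is symmetric positive definite, g ∈ ℝᵈ, and 0 < τ ≤ 1, then P_t is symmetric positive definite. -/

import Mathlib

/-!
Since `z τ = τ + gᵀPg`, the update equals `τ⁻¹ (P - (τ + gᵀPg)⁻¹ (Pg)(Pg)ᵀ)`. At `x ≠ 0` the
quadratic form of the bracket is `a - b² / (τ + c)` with `a = xᵀPx > 0`, `b = xᵀPg`, `c = gᵀPg`,
and Cauchy–Schwarz for the inner product induced by `P` gives `b² ≤ a c < a (τ + c)`.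
-/

open Matrix

namespace Matrix

variable {n : Type*} [Fintype n]

theorem PosSemidef.dotProduct_mulVec_sq_le {P : Matrix n n ℝ} (hP : P.PosSemidef) (x y : n → ℝ) :
    (x ⬝ᵥ P *ᵥ y) ^ 2 ≤ (x ⬝ᵥ P *ᵥ x) * (y ⬝ᵥ P *ᵥ y) := by
  let _ := P.toSeminormedAddCommGroup hP
  let _ := P.toInnerProductSpace hP
  have hinner (u v : n → ℝ) : inner ℝ u v = u ⬝ᵥ P *ᵥ v := by
    change (P *ᵥ v) ⬝ᵥ star u = _
    rw [star_trivial, dotProduct_comm]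
  simpa only [hinner, sq] using real_inner_mul_inner_self_le x y

theorem dotProduct_vecMulVec_self_mulVec (u x : n → ℝ) :
    x ⬝ᵥ vecMulVec u u *ᵥ x = (x ⬝ᵥ u) ^ 2 := by
  rw [vecMulVec_mulVec, op_smul_eq_smul, dotProduct_smul, smul_eq_mul, dotProduct_comm u, sq]

theorem PosDef.sub_inv_smul_vecMulVec {P : Matrix n n ℝ} (hP : P.PosDef) (g : n → ℝ) {t : ℝ}
    (ht : 0 < t) : (P - (t + g ⬝ᵥ P *ᵥ g)⁻¹ • vecMulVec (P *ᵥ g) (P *ᵥ g)).PosDef := by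
  have hc : 0 ≤ g ⬝ᵥ P *ᵥ g := by simpa using hP.posSemidef.dotProduct_mulVec_nonneg g
  have hs : 0 < t + g ⬝ᵥ P *ᵥ g := by positivity
  refine posDef_iff_dotProduct_mulVec.mpr ⟨hP.isHermitian.sub
    ((posSemidef_vecMulVec_self_star _).smul (inv_nonneg.mpr hs.le)).isHermitian, fun x hx => ?_⟩
  have ha : 0 < x ⬝ᵥ P *ᵥ x := by simpa using hP.dotProduct_mulVec_pos hx
  have hcs := hP.posSemidef.dotProduct_mulVec_sq_le x g
  rw [star_trivial, sub_mulVec, smul_mulVec, dotProduct_sub, dotProduct_smul,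
    dotProduct_vecMulVec_self_mulVec, smul_eq_mul, sub_pos, inv_mul_lt_iff₀ hs]
  nlinarith

end Matrix

theorem stmt_7_general (d : ℕ) (P : Matrix (Fin d) (Fin d) ℝ) (hP : P.PosDef)
    (g : Fin d → ℝ) (τ : ℝ) (hτ : 0 < τ)
    (z : ℝ) (hz : z = 1 + (g ⬝ᵥ P.mulVec g) / τ) :
    let k : Fin d → ℝ := (1 / (z * τ)) • P.mulVec g
    (τ⁻¹ • P - z • vecMulVec k k).PosDef := by
  intro k
  have hc : 0 ≤ g ⬝ᵥ P *ᵥ g := by simpa using hP.posSemidef.dotProduct_mulVec_nonneg g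
  have hz0 : z ≠ 0 := by rw [hz]; positivity
  have hzτ : z * τ = τ + g ⬝ᵥ P *ᵥ g := by rw [hz]; field_simp
  have hk : z • vecMulVec k k = τ⁻¹ • (τ + g ⬝ᵥ P *ᵥ g)⁻¹ • vecMulVec (P *ᵥ g) (P *ᵥ g) := by
    rw [smul_vecMulVec, vecMulVec_smul, smul_smul, smul_smul, smul_smul, ← hzτ]
    congr 1
    field_simp
  rw [hk, ← smul_sub]
  exact (hP.sub_inv_smul_vecMulVec g hτ).smul (inv_pos.mpr hτ)

theorem stmt_7 (d : ℕ) (P : Matrix (Fin d) (Fin d) ℝ) (hP : P.PosDef)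
    (g : Fin d → ℝ) (τ : ℝ) (hτ : 0 < τ) (hτ1 : τ ≤ 1)
    (z : ℝ) (hz : z = 1 + (g ⬝ᵥ P.mulVec g) / τ) :
    let k : Fin d → ℝ := (1 / (z * τ)) • P.mulVec g
    (τ⁻¹ • P - z • vecMulVec k k).PosDef :=
  stmt_7_general d P hP g τ hτ z hz
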